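/- For every M,N-invariant set Δ there is a unique pair of words (v,w) over the alphabet {0,1,•}, with v of length M and w of length N, such that Δ fits (v,w); moreover the number of 1's in v equals the number of 1's in w. -/

import Mathlib

/-- The alphabet {0, 1, •}. -/
inductive Symb where
  | zero : Symb
  | one : Symb
  | bullet : Symb
deriving DecidableEq

/-- An `M,N`-invariant set: a subset of ℕ with finite complement,
closed under adding `M` and adding `N`. -/
def Invariant (M N : ℕ) (Δ : Set ℕ) : Prop :=
  {n : ℕ | n ∉ Δ}.Finite ∧ ∀ i ∈ Δ, i + M ∈ Δ ∧ i + N ∈ Δ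

/-- `c` is a north step of `Δ`: `c ∉ Δ` and `c + N ∈ Δ`. -/
def NorthStep (N : ℕ) (Δ : Set ℕ) (c : ℕ) : Prop := c ∉ Δ ∧ c + N ∈ Δ

/-- `c` is an east step of `Δ`: `c ∉ Δ` and `c + M ∈ Δ`. -/
def EastStep (M : ℕ) (Δ : Set ℕ) (c : ℕ) : Prop := c ∉ Δ ∧ c + M ∈ Δ

/-- `area Δ` is the number of `c ≥ M + N` with `c ∉ Δ`. -/
noncomputable def area (M N : ℕ) (Δ : Set ℕ) : ℕ := {c : ℕ | M + N ≤ c ∧ c ∉ Δ}.ncard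

/-- `pdinv Δ` is the number of pairs `(c, d)` with `c < d`, `M ≤ d < c + M`,
`c` a north step of `Δ`, and `d ∉ Δ`. -/
noncomputable def pdinv (M N : ℕ) (Δ : Set ℕ) : ℕ :=
  {p : ℕ × ℕ | p.1 < p.2 ∧ M ≤ p.2 ∧ p.2 < p.1 + M ∧ NorthStep N Δ p.1 ∧ p.2 ∉ Δ}.ncard

/-- `Δ` fits the pair of words `(v, w)`, where `v` has length `M` and `w` has length `N`. -/
def Fits (M N : ℕ) (Δ : Set ℕ) (v w : List Symb) : Prop :=
  v.length = M ∧ w.length = N ∧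
  (∀ (i : ℕ) (hi : i < v.length),
    (v.get ⟨i, hi⟩ = Symb.bullet ↔ i ∈ Δ) ∧
    (v.get ⟨i, hi⟩ = Symb.one ↔ NorthStep N Δ i) ∧
    (v.get ⟨i, hi⟩ = Symb.zero ↔ (i ∉ Δ ∧ i + N ∉ Δ))) ∧
  (∀ (i : ℕ) (hi : i < w.length),
    (w.get ⟨i, hi⟩ = Symb.bullet ↔ i ∈ Δ) ∧
    (w.get ⟨i, hi⟩ = Symb.one ↔ EastStep M Δ i) ∧
    (w.get ⟨i, hi⟩ = Symb.zero ↔ (i ∉ Δ ∧ i + M ∉ Δ)))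

/-- Decrement: `dec Δ = {i : ℕ | i + 1 ∈ Δ}`. -/
def dec (Δ : Set ℕ) : Set ℕ := {i : ℕ | i + 1 ∈ Δ}

/-
Position `i` of either word only records whether `i`, resp. `i + K`, lies in `Δ`, so both words
are forced. For the count, closure under `+K` makes the gaps `i < n` with `i + K ∉ Δ` and the
1's of the word a partition of the gaps below `n`; hence the 1's of `v` and of `w` both equal
the number of gaps below `M + N` minus the gaps in `[M, M + N)` and in `[N, M + N)`.
-/

open Classical in
noncomputable def letter (Δ : Set ℕ) (K i : ℕ) : Symb :=
  if i ∈ Δ then Symb.bullet else if i + K ∈ Δ then Symb.one else Symb.zero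

noncomputable def word (Δ : Set ℕ) (K n : ℕ) : List Symb :=
  (List.range n).map (letter Δ K)

def Records (Δ : Set ℕ) (K : ℕ) (u : List Symb) : Prop :=
  ∀ (i : ℕ) (hi : i < u.length),
    (u.get ⟨i, hi⟩ = Symb.bullet ↔ i ∈ Δ) ∧
    (u.get ⟨i, hi⟩ = Symb.one ↔ (i ∉ Δ ∧ i + K ∈ Δ)) ∧
    (u.get ⟨i, hi⟩ = Symb.zero ↔ (i ∉ Δ ∧ i + K ∉ Δ))

open Classical in
noncomputable def gaps (Δ : Set ℕ) (a b : ℕ) : ℕ :=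
  ((Finset.Ico a b).filter (· ∉ Δ)).card

section Words

variable {Δ : Set ℕ} {K : ℕ}

@[simp]
lemma length_word (n : ℕ) : (word Δ K n).length = n := by
  simp [word]

lemma records_word (n : ℕ) : Records Δ K (word Δ K n) := by
  intro i hi
  simp only [List.get_eq_getElem, word, List.getElem_map, List.getElem_range, letter]
  by_cases h₁ : i ∈ Δ <;> by_cases h₂ : i + K ∈ Δ <;> simp [h₁, h₂]

lemma Records.eq_word {u : List Symb} (hu : Records Δ K u) : u = word Δ K u.length := by
  refine List.ext_get (by simp) fun i hi _ => ?_
  obtain ⟨hbullet, hone, hzero⟩ := hu i hi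
  simp only [List.get_eq_getElem, word, List.getElem_map, List.getElem_range, letter]
  by_cases h₁ : i ∈ Δ
  · simpa [h₁] using hbullet.mpr h₁
  by_cases h₂ : i + K ∈ Δ
  · simpa [h₁, h₂] using hone.mpr ⟨h₁, h₂⟩
  · simpa [h₁, h₂] using hzero.mpr ⟨h₁, h₂⟩

lemma records_iff_eq_word {u : List Symb} {n : ℕ} :
    u.length = n ∧ Records Δ K u ↔ u = word Δ K n := by
  constructor
  · rintro ⟨rfl, hu⟩
    exact hu.eq_word
  · rintro rfl
    exact ⟨length_word n, records_word n⟩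

end Words

lemma fits_iff_eq_words {M N : ℕ} {Δ : Set ℕ} {v w : List Symb} :
    Fits M N Δ v w ↔ v = word Δ N M ∧ w = word Δ M N := by
  rw [← records_iff_eq_word, ← records_iff_eq_word]
  exact ⟨fun ⟨hlv, hlw, hv, hw⟩ => ⟨⟨hlv, hv⟩, ⟨hlw, hw⟩⟩,
    fun ⟨⟨hlv, hv⟩, ⟨hlw, hw⟩⟩ => ⟨hlv, hlw, hv, hw⟩⟩

section Gaps

variable {Δ : Set ℕ}

lemma gaps_add_gaps {a b c : ℕ} (hab : a ≤ b) (hbc : b ≤ c) :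
    gaps Δ a b + gaps Δ b c = gaps Δ a c := by
  classical
  simp only [gaps, Finset.card_filter]
  exact Finset.sum_Ico_consecutive _ hab hbc

open Classical in
lemma gaps_succ {a b : ℕ} (hab : a ≤ b) :
    gaps Δ a (b + 1) = gaps Δ a b + if b ∈ Δ then 0 else 1 := by
  rw [← gaps_add_gaps hab b.le_succ]
  simp only [gaps, Nat.Ico_succ_singleton, Finset.filter_singleton, ite_not,
    Nat.add_left_cancel_iff]
  split_ifs <;> rfl

lemma count_one_word_add_gaps {K : ℕ} (hK : ∀ i ∈ Δ, i + K ∈ Δ) (n : ℕ) :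
    (word Δ K n).count Symb.one + gaps Δ K (n + K) = gaps Δ 0 n := by
  induction n with
  | zero => simp [word, gaps]
  | succ n ih =>
    have hstep : n + 1 + K = n + K + 1 := by omega
    rw [hstep, gaps_succ (by omega), gaps_succ n.zero_le, ← ih]
    simp only [word, List.range_succ, List.map_append, List.count_append, List.map_cons,
      List.map_nil, List.count_singleton, letter]
    by_cases h₁ : n ∈ Δ
    · simp [h₁, hK n h₁]
    by_cases h₂ : n + K ∈ Δ <;> simp [h₁, h₂] <;> omega

lemma count_one_word_eq {M N : ℕ} (hM : ∀ i ∈ Δ, i + M ∈ Δ) (hN : ∀ i ∈ Δ, i + N ∈ Δ) :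
    (word Δ N M).count Symb.one = (word Δ M N).count Symb.one := by
  have hv := count_one_word_add_gaps hN M
  have hw := count_one_word_add_gaps hM N
  have hMN := gaps_add_gaps (Δ := Δ) (Nat.zero_le M) (Nat.le_add_right M N)
  have hNM := gaps_add_gaps (Δ := Δ) (Nat.zero_le N) (Nat.le_add_left N M)
  rw [Nat.add_comm N M] at hw
  omega

end Gaps

theorem fits_existsUnique_and_ones_eq_general (M N : ℕ)
    (Δ : Set ℕ) (hΔ : Invariant M N Δ) :
    (∃! vw : List Symb × List Symb, Fits M N Δ vw.1 vw.2) ∧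
    ∀ v w : List Symb, Fits M N Δ v w → v.count Symb.one = w.count Symb.one := by
  refine ⟨⟨(word Δ N M, word Δ M N), fits_iff_eq_words.mpr ⟨rfl, rfl⟩, fun vw h => ?_⟩, ?_⟩
  · obtain ⟨hv, hw⟩ := fits_iff_eq_words.mp h
    exact Prod.ext hv hw
  · intro v w h
    obtain ⟨rfl, rfl⟩ := fits_iff_eq_words.mp h
    exact count_one_word_eq (fun i hi => (hΔ.2 i hi).1) (fun i hi => (hΔ.2 i hi).2)

/-- Every `M,N`-invariant set `Δ` fits a unique pair of words `(v, w)`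
over `{0,1,•}` with `v` of length `M` and `w` of length `N`; moreover for any such pair
the number of 1's in `v` equals the number of 1's in `w`. -/
theorem fits_existsUnique_and_ones_eq (M N : ℕ) (hM : 0 < M) (hN : 0 < N)
    (Δ : Set ℕ) (hΔ : Invariant M N Δ) :
    (∃! vw : List Symb × List Symb, Fits M N Δ vw.1 vw.2) ∧
    ∀ v w : List Symb, Fits M N Δ v w → v.count Symb.one = w.count Symb.one :=
  fits_existsUnique_and_ones_eq_general M N Δ hΔ
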